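/- arXiv:2304.03564 — 9 statements merged into one kernel-verified Lean document; each statement's English description precedes it below -/
import Mathlib

section
/- Let R be a ring with identity and a nontrivial idempotent e, let g : R → R satisfy Assumption A, and let d : R → R be a multiplicative skew semi-derivation with associated map g and automorphism α. Then for all a₁₁ ∈ R₁₁, a₁₂ ∈ R₁₂, a₂₁ ∈ R₂₁, a₂₂ ∈ R₂₂: (i) d(a₁₁ + a₁₂) = d(a₁₁) + d(a₁₂); (ii) d(a₁₁ + a₂₁) = d(a₁₁) + d(a₂₁); (iii) d(a₂₂ + a₁₂) = d(a₂₂) + d(a₁₂); (iv) d(a₂₂ + a₂₁) = d(a₂₂) + d(a₂₁); (v) d(a₁₁ + a₂₂) = d(a₁₁) + d(a₂₂). -/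
/-- `pel e 0 = e₁ = e`, `pel e 1 = e₂ = 1 - e`. -/
def pel {R : Type*} [Ring R] (e : R) : Fin 2 → R := fun i => if i = 0 then e else 1 - e

/-- The Peirce component `R_ij = e_i R e_j`. -/
def peirceSet {R : Type*} [Ring R] (e : R) (i j : Fin 2) : Set R :=
  {x | ∃ r : R, x = pel e i * r * pel e j}

/-- A multiplicative skew semi-derivation `d` with associated map `g` and automorphism `α`. -/
def IsMultSkewSemiDeriv {R : Type*} [Ring R] (d g : R → R) (α : R ≃+* R) : Prop :=
  (∀ x y : R, d (x * y) = d x * g y + α x * d y) ∧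
  (∀ x y : R, d (x * y) = d x * α y + g x * d y) ∧
  (∀ x : R, d (g x) = g (d x))

/-- A multiplicative generalized skew semi-derivation `f` with associated map `g`,
multiplicative skew semi-derivation `d` and automorphism `α`. -/
def IsMultGenSkewSemiDeriv {R : Type*} [Ring R] (f d g : R → R) (α : R ≃+* R) : Prop :=
  (∀ x y : R, f (x * y) = f x * g y + α x * d y) ∧
  (∀ x y : R, f (x * y) = d x * α y + g x * f y) ∧
  (∀ x : R, f (g x) = g (f x))

/-- Assumption A on the map `g`. -/
def AssumptionA {R : Type*} [Ring R] (e : R) (g : R → R) : Prop :=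
  g 0 = 0 ∧
  (∀ i j k : Fin 2, i ≤ j →
    ∀ a ∈ peirceSet e k 0, ∀ b ∈ peirceSet e k 1,
      (∀ x ∈ peirceSet e i j, (a + b) * g x = 0) →
      (i = 0 → a = 0) ∧ (i = 1 → b = 0)) ∧
  (∀ i j : Fin 2,
    ∀ a ∈ peirceSet e 0 j, ∀ b ∈ peirceSet e 1 j,
      (∀ x ∈ peirceSet e i i, g x * (a + b) = 0) →
      (i = 0 → a = 0) ∧ (i = 1 → b = 0)) ∧
  (∀ a ∈ peirceSet e 0 0, ∀ b ∈ peirceSet e 0 1, g (a + b) = g a + g b) ∧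
  (∀ a ∈ peirceSet e 0 0, ∀ b ∈ peirceSet e 1 0, g (a + b) = g a + g b)

/-- Assumption B on the map `g`. -/
def AssumptionB {R : Type*} [Ring R] (e : R) (g : R → R) : Prop :=
  g 0 = 0 ∧
  (∀ i j : Fin 2,
    ∀ a ∈ peirceSet e j 0, ∀ b ∈ peirceSet e j 1,
      (∀ x ∈ peirceSet e i i, (a + b) * g x = 0) → a + b = 0) ∧
  (∀ i : Fin 2,
    ∀ a ∈ peirceSet e 0 0, ∀ c ∈ peirceSet e 1 0,
      (∀ x ∈ peirceSet e i i, g x * (a + c) = 0) → a + c = 0)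

section Aux
variable {R : Type*} [Ring R]

/-- `d 0 = 0`. -/
lemma myDZero {d g : R → R} {α : R ≃+* R} (hd : IsMultSkewSemiDeriv d g α)
    (hg0 : g 0 = 0) : d 0 = 0 := by
  have h := hd.1 0 0
  simpa [hg0] using h

/-- If `u * x = 0`, the additivity obstruction on `u + v` right-annihilates `g x`. -/
lemma myKeyR {d g : R → R} {α : R ≃+* R} (hd : IsMultSkewSemiDeriv d g α)
    (hg0 : g 0 = 0) (u v x : R) (hux : u * x = 0) :
    (d (u + v) - d u - d v) * g x = 0 := by
  have h1 := hd.1 (u + v) x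
  have h2 := hd.1 v x
  have h3 := hd.1 u x
  rw [hux, myDZero hd hg0] at h3
  rw [show (u + v) * x = v * x by rw [add_mul, hux, zero_add], h2, map_add, add_mul] at h1
  rw [← add_assoc, add_left_inj] at h1
  rw [sub_mul, sub_mul, h1]
  rw [show d (u + v) * g x - d u * g x - (d (u + v) * g x + α u * d x)
      = -(d u * g x + α u * d x) from by abel, ← h3, neg_zero]

/-- If `x * u = 0`, the additivity obstruction on `u + v` left-annihilates `g x`. -/
lemma myKeyL {d g : R → R} {α : R ≃+* R} (hd : IsMultSkewSemiDeriv d g α)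
    (hg0 : g 0 = 0) (u v x : R) (hxu : x * u = 0) :
    g x * (d (u + v) - d u - d v) = 0 := by
  have h1 := hd.2.1 x (u + v)
  have h2 := hd.2.1 x v
  have h3 := hd.2.1 x u
  rw [hxu, myDZero hd hg0] at h3
  rw [show x * (u + v) = x * v by rw [mul_add, hxu, zero_add], h2, map_add, mul_add] at h1
  rw [mul_sub, mul_sub]
  have h1' : g x * d v = d x * α u + g x * d (u + v) := by
    have h := h1
    rw [show d x * (α u) + d x * (α v) + g x * d (u + v)
        = d x * α v + (d x * α u + g x * d (u + v)) from by abel] at h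
    exact add_left_cancel h
  rw [h1', show g x * d (u + v) - g x * d u - (d x * α u + g x * d (u + v))
      = -(d x * α u + g x * d u) from by abel, ← h3, neg_zero]

/-- Peirce components multiply to zero when the inner indices differ. -/
lemma myPz (e : R) (he : e * e = e) {i j k l : Fin 2} (hjk : j ≠ k) (r s : R) :
    (pel e i * r * pel e j) * (pel e k * s * pel e l) = 0 := by
  have h : pel e j * pel e k = 0 := by
    fin_cases j <;> fin_cases k <;> simp_all [pel] <;>
      first
        | (rw [mul_sub, mul_one, he, sub_self])
        | (rw [sub_mul, one_mul, he, sub_self])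
  calc (pel e i * r * pel e j) * (pel e k * s * pel e l)
      = pel e i * r * (pel e j * pel e k) * (s * pel e l) := by noncomm_ring
    _ = 0 := by rw [h, mul_zero, zero_mul]

/-- If `T` right-annihilates `g` on `R₁₂` and `R₂₂`, then `T = 0` (via Assumption A (i)). -/
lemma myRightAnn (e : R) {g : R → R} (hg : AssumptionA e g) (T : R)
    (h01 : ∀ x ∈ peirceSet e 0 1, T * g x = 0)
    (h11 : ∀ x ∈ peirceSet e 1 1, T * g x = 0) : T = 0 := by
  have key : ∀ k : Fin 2, pel e k * T = 0 := by
    intro k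
    have ha : pel e k * T * e ∈ peirceSet e k 0 := ⟨T, by simp [pel]⟩
    have hb : pel e k * T * (1 - e) ∈ peirceSet e k 1 := ⟨T, by simp [pel]⟩
    have hsum : pel e k * T * e + pel e k * T * (1 - e) = pel e k * T := by noncomm_ring
    have hz : ∀ j : Fin 2, ∀ x ∈ peirceSet e j 1,
        (pel e k * T * e + pel e k * T * (1 - e)) * g x = 0 := by
      intro j x hx
      rw [hsum, mul_assoc]
      rcases j with _ | _
      · rw [h01 x hx, mul_zero]
      · rw [h11 x hx, mul_zero]
    have h1 := (hg.2.1 0 1 k (by decide) _ ha _ hb (hz 0)).1 rfl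
    have h2 := (hg.2.1 1 1 k (by decide) _ ha _ hb (hz 1)).2 rfl
    rw [← hsum, h1, h2, add_zero]
  have k0 := key 0
  have k1 := key 1
  simp only [pel] at k0 k1
  norm_num at k0 k1
  have h : (e + (1 - e)) * T = 0 := by rw [add_mul, k0, k1, add_zero]
  simpa using h

/-- If `T` left-annihilates `g` on `R₁₁` and `R₂₂`, then `T = 0` (via Assumption A (ii)). -/
lemma myLeftAnn (e : R) {g : R → R} (hg : AssumptionA e g) (T : R)
    (h00 : ∀ x ∈ peirceSet e 0 0, g x * T = 0)
    (h11 : ∀ x ∈ peirceSet e 1 1, g x * T = 0) : T = 0 := by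
  have key : ∀ j : Fin 2, T * pel e j = 0 := by
    intro j
    have ha : e * T * pel e j ∈ peirceSet e 0 j := ⟨T, by simp [pel]⟩
    have hb : (1 - e) * T * pel e j ∈ peirceSet e 1 j := ⟨T, by simp [pel]⟩
    have hsum : e * T * pel e j + (1 - e) * T * pel e j = T * pel e j := by noncomm_ring
    have hz : ∀ i : Fin 2, (∀ x ∈ peirceSet e i i, g x * T = 0) →
        ∀ x ∈ peirceSet e i i, g x * (e * T * pel e j + (1 - e) * T * pel e j) = 0 := by
      intro i hi x hx
      rw [hsum, ← mul_assoc, hi x hx, zero_mul]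
    have h1 := (hg.2.2.1 0 j _ ha _ hb (hz 0 h00)).1 rfl
    have h2 := (hg.2.2.1 1 j _ ha _ hb (hz 1 h11)).2 rfl
    rw [← hsum, h1, h2, add_zero]
  have k0 := key 0
  have k1 := key 1
  simp only [pel] at k0 k1
  norm_num at k0 k1
  have h : T * (e + (1 - e)) = 0 := by rw [mul_add, k0, k1, add_zero]
  simpa using h

end Aux

theorem stmt_1 {R : Type*} [Ring R] (e : R) (he : e * e = e) (he0 : e ≠ 0) (he1 : e ≠ 1)
    (g : R → R) (hg : AssumptionA e g) (α : R ≃+* R) (d : R → R)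
    (hd : IsMultSkewSemiDeriv d g α) :
    ∀ a11 ∈ peirceSet e 0 0, ∀ a12 ∈ peirceSet e 0 1, ∀ a21 ∈ peirceSet e 1 0,
      ∀ a22 ∈ peirceSet e 1 1,
        d (a11 + a12) = d a11 + d a12 ∧
        d (a11 + a21) = d a11 + d a21 ∧
        d (a22 + a12) = d a22 + d a12 ∧
        d (a22 + a21) = d a22 + d a21 ∧
        d (a11 + a22) = d a11 + d a22 := by
  rintro a11 ⟨r11, hr11⟩ a12 ⟨r12, hr12⟩ a21 ⟨r21, hr21⟩ a22 ⟨r22, hr22⟩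
  refine ⟨?_, ?_, ?_, ?_, ?_⟩
  · -- (i) a11 + a12, right annihilation
    have hT : d (a11 + a12) - d a11 - d a12 = 0 := by
      apply myRightAnn e hg
      · rintro x ⟨s, rfl⟩
        have hz : a12 * (pel e 0 * s * pel e 1) = 0 := by
          rw [hr12]; exact myPz e he (by decide) r12 s
        have h := myKeyR hd hg.1 a12 a11 _ hz
        rwa [add_comm a12 a11, sub_right_comm] at h
      · rintro x ⟨s, rfl⟩
        have hz : a11 * (pel e 1 * s * pel e 1) = 0 := by
          rw [hr11]; exact myPz e he (by decide) r11 s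
        exact myKeyR hd hg.1 a11 a12 _ hz
    rw [sub_sub, sub_eq_zero] at hT
    exact hT
  · -- (ii) a11 + a21, left annihilation
    have hT : d (a11 + a21) - d a11 - d a21 = 0 := by
      apply myLeftAnn e hg
      · rintro x ⟨s, rfl⟩
        have hz : (pel e 0 * s * pel e 0) * a21 = 0 := by
          rw [hr21]; exact myPz e he (by decide) s r21
        have h := myKeyL hd hg.1 a21 a11 _ hz
        rwa [add_comm a21 a11, sub_right_comm] at h
      · rintro x ⟨s, rfl⟩
        have hz : (pel e 1 * s * pel e 1) * a11 = 0 := by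
          rw [hr11]; exact myPz e he (by decide) s r11
        exact myKeyL hd hg.1 a11 a21 _ hz
    rw [sub_sub, sub_eq_zero] at hT
    exact hT
  · -- (iii) a22 + a12, left annihilation
    have hT : d (a22 + a12) - d a22 - d a12 = 0 := by
      apply myLeftAnn e hg
      · rintro x ⟨s, rfl⟩
        have hz : (pel e 0 * s * pel e 0) * a22 = 0 := by
          rw [hr22]; exact myPz e he (by decide) s r22
        exact myKeyL hd hg.1 a22 a12 _ hz
      · rintro x ⟨s, rfl⟩
        have hz : (pel e 1 * s * pel e 1) * a12 = 0 := by
          rw [hr12]; exact myPz e he (by decide) s r12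
        have h := myKeyL hd hg.1 a12 a22 _ hz
        rwa [add_comm a12 a22, sub_right_comm] at h
    rw [sub_sub, sub_eq_zero] at hT
    exact hT
  · -- (iv) a22 + a21, right annihilation
    have hT : d (a22 + a21) - d a22 - d a21 = 0 := by
      apply myRightAnn e hg
      · rintro x ⟨s, rfl⟩
        have hz : a22 * (pel e 0 * s * pel e 1) = 0 := by
          rw [hr22]; exact myPz e he (by decide) r22 s
        exact myKeyR hd hg.1 a22 a21 _ hz
      · rintro x ⟨s, rfl⟩
        have hz : a21 * (pel e 1 * s * pel e 1) = 0 := by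
          rw [hr21]; exact myPz e he (by decide) r21 s
        have h := myKeyR hd hg.1 a21 a22 _ hz
        rwa [add_comm a21 a22, sub_right_comm] at h
    rw [sub_sub, sub_eq_zero] at hT
    exact hT
  · -- (v) a11 + a22, right annihilation
    have hT : d (a11 + a22) - d a11 - d a22 = 0 := by
      apply myRightAnn e hg
      · rintro x ⟨s, rfl⟩
        have hz : a22 * (pel e 0 * s * pel e 1) = 0 := by
          rw [hr22]; exact myPz e he (by decide) r22 s
        have h := myKeyR hd hg.1 a22 a11 _ hz
        rwa [add_comm a22 a11, sub_right_comm] at h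
      · rintro x ⟨s, rfl⟩
        have hz : a11 * (pel e 1 * s * pel e 1) = 0 := by
          rw [hr11]; exact myPz e he (by decide) r11 s
        exact myKeyR hd hg.1 a11 a22 _ hz
    rw [sub_sub, sub_eq_zero] at hT
    exact hT
end

section
/- Let R be a ring with identity and a nontrivial idempotent e, let g : R → R satisfy Assumption A, and let d : R → R be a multiplicative skew semi-derivation with associated map g and automorphism α. Then for all a₁₂, b₁₂ ∈ R₁₂, c₂₂, b₂₂ ∈ R₂₂, a₂₁ ∈ R₂₁, c₂₁ ∈ R₂₁: (i) d(a₁₂ + b₁₂·c₂₂) = d(a₁₂) + d(b₁₂·c₂₂); (ii) d(a₂₁ + b₂₂·c₂₁) = d(a₂₁) + d(b₂₂·c₂₁). -/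
section Helpers

variable {R : Type*} [Ring R] {e : R}

lemma pel_zero (e : R) : pel e 0 = e := rfl
lemma pel_one (e : R) : pel e 1 = 1 - e := rfl

lemma pel_mul_self (he : e * e = e) (i : Fin 2) : pel e i * pel e i = pel e i := by
  fin_cases i
  · exact he
  · show (1 - e) * (1 - e) = 1 - e
    rw [mul_sub, mul_one, sub_mul, one_mul, he, sub_self, sub_zero]

lemma pel_mul_ne (he : e * e = e) {i j : Fin 2} (h : i ≠ j) : pel e i * pel e j = 0 := by
  fin_cases i <;> fin_cases j
  · exact absurd rfl h
  · show e * (1 - e) = 0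
    rw [mul_sub, mul_one, he, sub_self]
  · show (1 - e) * e = 0
    rw [sub_mul, one_mul, he, sub_self]
  · exact absurd rfl h

lemma pel_mul_mem_self (he : e * e = e) {i l : Fin 2} {y : R}
    (hy : y ∈ peirceSet e i l) : pel e i * y = y := by
  obtain ⟨r, rfl⟩ := hy
  rw [show pel e i * (pel e i * r * pel e l) = (pel e i * pel e i) * r * pel e l by
        noncomm_ring,
    pel_mul_self he]

lemma mem_mul_pel_self (he : e * e = e) {i l : Fin 2} {y : R}
    (hy : y ∈ peirceSet e i l) : y * pel e l = y := by
  obtain ⟨r, rfl⟩ := hy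
  rw [show pel e i * r * pel e l * pel e l = pel e i * r * (pel e l * pel e l) by
        noncomm_ring,
    pel_mul_self he]

lemma pel_mul_mem_ne (he : e * e = e) {k i l : Fin 2} (h : k ≠ i) {y : R}
    (hy : y ∈ peirceSet e i l) : pel e k * y = 0 := by
  obtain ⟨r, rfl⟩ := hy
  rw [show pel e k * (pel e i * r * pel e l) = (pel e k * pel e i) * (r * pel e l) by
        noncomm_ring,
    pel_mul_ne he h, zero_mul]

lemma mem_mul_pel_ne (he : e * e = e) {i j k : Fin 2} (h : j ≠ k) {x : R}
    (hx : x ∈ peirceSet e i j) : x * pel e k = 0 := by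
  obtain ⟨r, rfl⟩ := hx
  rw [show pel e i * r * pel e j * pel e k = (pel e i * r) * (pel e j * pel e k) by
        noncomm_ring,
    pel_mul_ne he h, mul_zero]

lemma mem_mul_mem (he : e * e = e) {i j k : Fin 2} {x y : R}
    (hx : x ∈ peirceSet e i j) (hy : y ∈ peirceSet e j k) :
    x * y ∈ peirceSet e i k := by
  obtain ⟨r, rfl⟩ := hx; obtain ⟨t, rfl⟩ := hy
  exact ⟨r * pel e j * (pel e j * t), by noncomm_ring⟩

lemma mem_mul_mem_ne (he : e * e = e) {i j k l : Fin 2} (h : j ≠ k) {x y : R}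
    (hx : x ∈ peirceSet e i j) (hy : y ∈ peirceSet e k l) : x * y = 0 := by
  obtain ⟨t, rfl⟩ := hy
  rw [show x * (pel e k * t * pel e l) = (x * pel e k) * (t * pel e l) by noncomm_ring,
    mem_mul_pel_ne he h hx, zero_mul]

/-- If `g x * T = 0` for all `x` in the diagonal Peirce components, then `T = 0`. -/
lemma eq_zero_of_g_mul {g : R → R} (hg : AssumptionA e g) {T : R}
    (h : ∀ i : Fin 2, ∀ x ∈ peirceSet e i i, g x * T = 0) : T = 0 := by
  obtain ⟨-, -, hgii, -, -⟩ := hg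
  have hcol : ∀ j : Fin 2, T * pel e j = 0 := by
    intro j
    have ha : e * T * pel e j ∈ peirceSet e 0 j := ⟨T, rfl⟩
    have hb : (1 - e) * T * pel e j ∈ peirceSet e 1 j := ⟨T, rfl⟩
    have hsum : e * T * pel e j + (1 - e) * T * pel e j = T * pel e j := by noncomm_ring
    have hcond : ∀ i : Fin 2, ∀ x ∈ peirceSet e i i,
        g x * (e * T * pel e j + (1 - e) * T * pel e j) = 0 := by
      intro i x hx
      rw [hsum, ← mul_assoc, h i x hx, zero_mul]
    have h0 := (hgii 0 j _ ha _ hb (hcond 0)).1 rfl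
    have h1 := (hgii 1 j _ ha _ hb (hcond 1)).2 rfl
    rw [← hsum, h0, h1, add_zero]
  have h0 := hcol 0
  have h1 := hcol 1
  rw [pel_zero] at h0
  rw [pel_one] at h1
  have hT : T = T * e + T * (1 - e) := by noncomm_ring
  rw [hT, h0, h1, add_zero]

/-- If `T * g x = 0` for all `x` in the diagonal Peirce components, then `T = 0`. -/
lemma eq_zero_of_mul_g {g : R → R} (hg : AssumptionA e g) {T : R}
    (h : ∀ i : Fin 2, ∀ x ∈ peirceSet e i i, T * g x = 0) : T = 0 := by
  obtain ⟨-, hgi, -, -, -⟩ := hg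
  have hrow : ∀ k : Fin 2, pel e k * T = 0 := by
    intro k
    have ha : pel e k * T * e ∈ peirceSet e k 0 := ⟨T, rfl⟩
    have hb : pel e k * T * (1 - e) ∈ peirceSet e k 1 := ⟨T, rfl⟩
    have hsum : pel e k * T * e + pel e k * T * (1 - e) = pel e k * T := by noncomm_ring
    have hcond : ∀ i : Fin 2, ∀ x ∈ peirceSet e i i,
        (pel e k * T * e + pel e k * T * (1 - e)) * g x = 0 := by
      intro i x hx
      rw [hsum, mul_assoc, h i x hx, mul_zero]
    have h0 := (hgi 0 0 k le_rfl _ ha _ hb (hcond 0)).1 rfl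
    have h1 := (hgi 1 1 k le_rfl _ ha _ hb (hcond 1)).2 rfl
    rw [← hsum, h0, h1, add_zero]
  have h0 := hrow 0
  have h1 := hrow 1
  rw [pel_zero] at h0
  rw [pel_one] at h1
  have hT : T = e * T + (1 - e) * T := by noncomm_ring
  rw [hT, h0, h1, add_zero]

variable {g d : R → R} {α : R ≃+* R}

lemma d_zero (hg0 : g 0 = 0)
    (hd1 : ∀ x y : R, d (x * y) = d x * g y + α x * d y) : d 0 = 0 := by
  have h := hd1 0 0
  rw [mul_zero, hg0, mul_zero, map_zero, zero_mul, add_zero] at h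
  exact h

lemma sub_formula_left (hd2 : ∀ x y : R, d (x * y) = d x * α y + g x * d y)
    (x A B : R) :
    g x * (d (A + B) - d A - d B) = d (x * (A + B)) - d (x * A) - d (x * B) := by
  have k1 : g x * d (A + B) = d (x * (A + B)) - d x * α (A + B) := by
    rw [hd2 x (A + B)]; abel
  have k2 : g x * d A = d (x * A) - d x * α A := by rw [hd2 x A]; abel
  have k3 : g x * d B = d (x * B) - d x * α B := by rw [hd2 x B]; abel
  rw [mul_sub, mul_sub, k1, k2, k3, map_add]
  noncomm_ring

lemma sub_formula_right (hd1 : ∀ x y : R, d (x * y) = d x * g y + α x * d y)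
    (x A B : R) :
    (d (A + B) - d A - d B) * g x = d ((A + B) * x) - d (A * x) - d (B * x) := by
  have k1 : d (A + B) * g x = d ((A + B) * x) - α (A + B) * d x := by
    rw [hd1 (A + B) x]; abel
  have k2 : d A * g x = d (A * x) - α A * d x := by rw [hd1 A x]; abel
  have k3 : d B * g x = d (B * x) - α B * d x := by rw [hd1 B x]; abel
  rw [sub_mul, sub_mul, k1, k2, k3, map_add]
  noncomm_ring

/-- Additivity of `d` on `eR + (1-e)R`. -/
lemma d_add_of_rows (he : e * e = e) (hg : AssumptionA e g)
    (hd1 : ∀ x y : R, d (x * y) = d x * g y + α x * d y)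
    (hd2 : ∀ x y : R, d (x * y) = d x * α y + g x * d y)
    {u v : R} (hu : e * u = u) (hv : (1 - e) * v = v) :
    d (u + v) = d u + d v := by
  have hd0 : d 0 = 0 := d_zero hg.1 hd1
  have key : ∀ i : Fin 2, ∀ x ∈ peirceSet e i i, g x * (d (u + v) - d u - d v) = 0 := by
    intro i x hx
    rw [sub_formula_left hd2]
    fin_cases i
    · -- x ends with e, so x * v = 0
      have hxv : x * v = 0 := by
        rw [← hv, show x * ((1 - e) * v) = (x * pel e 1) * v from by
              rw [pel_one]; noncomm_ring,
          mem_mul_pel_ne he (by decide) hx, zero_mul]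
      rw [mul_add, hxv, add_zero, hd0]
      abel
    · -- x ends with 1 - e, so x * u = 0
      have hxu : x * u = 0 := by
        rw [← hu, show x * (e * u) = (x * pel e 0) * u from by
              rw [pel_zero]; noncomm_ring,
          mem_mul_pel_ne he (by decide) hx, zero_mul]
      rw [mul_add, hxu, zero_add, hd0]
      abel
  have hW : d (u + v) - d u - d v = 0 := eq_zero_of_g_mul hg key
  rw [sub_sub] at hW
  exact sub_eq_zero.mp hW

end Helpers

theorem stmt_2 {R : Type*} [Ring R] (e : R) (he : e * e = e) (he0 : e ≠ 0) (he1 : e ≠ 1)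
    (g : R → R) (hg : AssumptionA e g) (α : R ≃+* R) (d : R → R)
    (hd : IsMultSkewSemiDeriv d g α) :
    ∀ a12 ∈ peirceSet e 0 1, ∀ b12 ∈ peirceSet e 0 1, ∀ c22 ∈ peirceSet e 1 1,
      ∀ b22 ∈ peirceSet e 1 1, ∀ a21 ∈ peirceSet e 1 0, ∀ c21 ∈ peirceSet e 1 0,
        d (a12 + b12 * c22) = d a12 + d (b12 * c22) ∧
        d (a21 + b22 * c21) = d a21 + d (b22 * c21) := by
  obtain ⟨hd1, hd2, -⟩ := hd
  have hd0 : d 0 = 0 := d_zero hg.1 hd1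
  intro A hA B hB C hC B2 hB2 A2 hA2 C2 hC2
  constructor
  · -- Part (i): A = a12, B = b12, C = c22.  p = e + B, q = A + C, s = A + B*C = p*q.
    have heA : e * A = A := pel_mul_mem_self he hA
    have heC : e * C = 0 := pel_mul_mem_ne (k := 0) he (by decide) hC
    have hBA : B * A = 0 := mem_mul_mem_ne he (by decide) hB hA
    have hpq : (e + B) * (A + C) = A + B * C := by
      rw [show (e + B) * (A + C) = e * A + e * C + (B * A + B * C) by noncomm_ring,
        heA, heC, hBA, add_zero, zero_add]
    have hpA : (e + B) * A = A := by
      rw [add_mul, heA, hBA, add_zero]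
    have hpC : (e + B) * C = B * C := by
      rw [add_mul, heC, zero_add]
    -- d is additive on q = A + C
    have hq : d (A + C) = d A + d C :=
      d_add_of_rows he hg hd1 hd2 heA (pel_mul_mem_self he hC)
    -- g x * T = 0 on diagonal components
    have key : ∀ i : Fin 2, ∀ x ∈ peirceSet e i i,
        g x * (d (A + B * C) - d A - d (B * C)) = 0 := by
      intro i x hx
      rw [sub_formula_left hd2]
      fin_cases i
      · -- x ∈ R₁₁ : use the factorization
        have hxs : x * (A + B * C) = (x * (e + B)) * (A + C) := by
          rw [mul_assoc, hpq]
        have hxA : x * A = (x * (e + B)) * A := by rw [mul_assoc, hpA]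
        have hxBC : x * (B * C) = (x * (e + B)) * C := by rw [mul_assoc, hpC]
        rw [hxs, hxA, hxBC, hd2 (x * (e + B)) (A + C), hd2 (x * (e + B)) A,
          hd2 (x * (e + B)) C, map_add, hq]
        noncomm_ring
      · -- x ∈ R₂₂ : everything annihilates
        have hxA : x * A = 0 := mem_mul_mem_ne he (by decide) hx hA
        have hxBC : x * (B * C) = 0 := by
          rw [show x * (B * C) = (x * B) * C from (mul_assoc x B C).symm,
            mem_mul_mem_ne he (by decide) hx hB, zero_mul]
        rw [mul_add, hxA, hxBC, zero_add, hd0]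
        abel
    have hT : d (A + B * C) - d A - d (B * C) = 0 := eq_zero_of_g_mul hg key
    rw [sub_sub] at hT
    exact sub_eq_zero.mp hT
  · -- Part (ii): A2 = a21, B2 = b22, C2 = c21.  q' = A2 + B2, p' = e + C2.
    have hA2e : A2 * e = A2 := mem_mul_pel_self he hA2
    have hB2e : B2 * e = 0 := mem_mul_pel_ne (k := 0) he (by decide) hB2
    have hA2C2 : A2 * C2 = 0 := mem_mul_mem_ne he (by decide) hA2 hC2
    have hqe : (A2 + B2) * e = A2 := by rw [add_mul, hA2e, hB2e, add_zero]
    have hqc : (A2 + B2) * C2 = B2 * C2 := by rw [add_mul, hA2C2, zero_add]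
    have hqp : (A2 + B2) * (e + C2) = A2 + B2 * C2 := by
      rw [mul_add, hqe, hqc]
    have hgiv := hg.2.2.2.2
    have key : ∀ i : Fin 2, ∀ x ∈ peirceSet e i i,
        (d (A2 + B2 * C2) - d A2 - d (B2 * C2)) * g x = 0 := by
      intro i x hx
      rw [sub_formula_right hd1]
      fin_cases i
      · -- x ∈ R₁₁
        have hex : e * x = x := pel_mul_mem_self he hx
        have hC2x : C2 * x ∈ peirceSet e 1 0 := mem_mul_mem he hC2 hx
        have hsx : (A2 + B2 * C2) * x = (A2 + B2) * ((e + C2) * x) := by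
          rw [← mul_assoc, hqp]
        have hAx : A2 * x = (A2 + B2) * x := by
          rw [add_mul, mem_mul_mem_ne he (by decide) hB2 hx, add_zero]
        have hBCx : (B2 * C2) * x = (A2 + B2) * (C2 * x) := by
          rw [← mul_assoc, hqc]
        have hpx : (e + C2) * x = x + C2 * x := by rw [add_mul, hex]
        have hgpx : g (x + C2 * x) = g x + g (C2 * x) := hgiv x hx (C2 * x) hC2x
        have hdpx : d (x + C2 * x) = d x + d (C2 * x) :=
          d_add_of_rows he hg hd1 hd2 hex (pel_mul_mem_self he hC2x)
        rw [hsx, hAx, hBCx, hpx, hd1 (A2 + B2) (x + C2 * x), hd1 (A2 + B2) x,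
          hd1 (A2 + B2) (C2 * x), hgpx, hdpx]
        noncomm_ring
      · -- x ∈ R₂₂
        have hAx : A2 * x = 0 := mem_mul_mem_ne he (by decide) hA2 hx
        have hBCx : (B2 * C2) * x = 0 :=
          mem_mul_mem_ne he (by decide) (mem_mul_mem he hB2 hC2) hx
        rw [add_mul, hAx, hBCx, zero_add, hd0]
        abel
    have hT : d (A2 + B2 * C2) - d A2 - d (B2 * C2) = 0 := eq_zero_of_mul_g hg key
    rw [sub_sub] at hT
    exact sub_eq_zero.mp hT
end

section
/- Let R be a ring with identity and a nontrivial idempotent e, let g : R → R satisfy Assumption A, and let d : R → R be a multiplicative skew semi-derivation with associated map g and automorphism α. Then for all a₁₁ ∈ R₁₁, a₁₂ ∈ R₁₂, a₂₁ ∈ R₂₁, a₂₂ ∈ R₂₂: d(a₁₁ + a₁₂ + a₂₁ + a₂₂) = d(a₁₁) + d(a₁₂) + d(a₂₁) + d(a₂₂). -/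
/-!
Evaluating `d` on a product in two ways gives, for any family `aᵢ` and any `y`,
`(d (∑ aᵢ) - ∑ d aᵢ) * g y = d ((∑ aᵢ) y) - ∑ d (aᵢ y)`, and the mirror identity with `g y`
on the left. For `y` in a suitable Peirce component most products `aᵢ y` (or `y aᵢ`) vanish,
so the right-hand side is zero, and Assumption A cancels `g y`. Cancelling on the left against
the diagonal components gives additivity on each column `R₁ⱼ + R₂ⱼ`; with it, the right-hand
side vanishes for `a₁₁ + a₁₂ + a₂₁ + a₂₂` when `y` runs over the second column `R₁₂ ∪ R₂₂`.
-/

open Finset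

section Peirce

variable {R : Type*} [Ring R] {e : R}

lemma pel_mul_pel (he : e * e = e) (i j : Fin 2) :
    pel e i * pel e j = if i = j then pel e i else 0 := by
  have h₁ : e * (1 - e) = 0 := by rw [mul_sub, mul_one, he, sub_self]
  have h₂ : (1 - e) * e = 0 := by rw [sub_mul, one_mul, he, sub_self]
  have h₃ : (1 - e) * (1 - e) = 1 - e := by rw [mul_sub, mul_one, h₂, sub_zero]
  fin_cases i <;> fin_cases j <;> simp [pel, he, h₁, h₂, h₃]

lemma sum_pel (e : R) : ∑ i, pel e i = 1 := by simp [pel]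

lemma mul_eq_zero_of_mem_peirceSet (he : e * e = e) {i j k l : Fin 2} (hjk : j ≠ k)
    {a b : R} (ha : a ∈ peirceSet e i j) (hb : b ∈ peirceSet e k l) : a * b = 0 := by
  obtain ⟨r, rfl⟩ := ha
  obtain ⟨s, rfl⟩ := hb
  calc pel e i * r * pel e j * (pel e k * s * pel e l)
      = pel e i * r * (pel e j * pel e k) * (s * pel e l) := by noncomm_ring
    _ = 0 := by rw [pel_mul_pel he, if_neg hjk, mul_zero, zero_mul]

lemma mul_mem_peirceSet (he : e * e = e) {i j l : Fin 2} {a b : R}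
    (ha : a ∈ peirceSet e i j) (hb : b ∈ peirceSet e j l) : a * b ∈ peirceSet e i l := by
  obtain ⟨r, rfl⟩ := ha
  obtain ⟨s, rfl⟩ := hb
  refine ⟨r * pel e j * s, ?_⟩
  calc pel e i * r * pel e j * (pel e j * s * pel e l)
      = pel e i * r * (pel e j * pel e j) * (s * pel e l) := by noncomm_ring
    _ = pel e i * (r * pel e j * s) * pel e l := by
      rw [pel_mul_pel he, if_pos rfl]; noncomm_ring

lemma eq_zero_of_forall_pel_mul_mul_pel {T : R} (h : ∀ i j, pel e i * T * pel e j = 0) :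
    T = 0 := by
  calc T = (∑ i, pel e i) * T * ∑ j, pel e j := by rw [sum_pel, one_mul, mul_one]
    _ = ∑ j, ∑ i, pel e i * T * pel e j := by simp only [sum_mul, mul_sum]
    _ = 0 := by simp [h]

end Peirce

namespace AssumptionA

variable {R : Type*} [Ring R] {e : R} {g : R → R}

lemma eq_zero_of_forall_mul_map_eq_zero (hg : AssumptionA e g) {T : R}
    (hT : ∀ k, ∀ x ∈ peirceSet e k 1, T * g x = 0) : T = 0 := by
  refine eq_zero_of_forall_pel_mul_mul_pel (e := e) fun i j => ?_
  have hrow : ∀ k, ∀ x ∈ peirceSet e k 1,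
      (pel e i * T * pel e 0 + pel e i * T * pel e 1) * g x = 0 := by
    intro k x hx
    rw [← mul_add, ← Fin.sum_univ_two (pel e), sum_pel, mul_one, mul_assoc, hT k x hx,
      mul_zero]
  have hA := hg.2.1
  fin_cases j
  · exact (hA 0 1 i zero_le_one _ ⟨T, rfl⟩ _ ⟨T, rfl⟩ (hrow 0)).1 rfl
  · exact (hA 1 1 i le_rfl _ ⟨T, rfl⟩ _ ⟨T, rfl⟩ (hrow 1)).2 rfl

lemma eq_zero_of_forall_map_mul_eq_zero (hg : AssumptionA e g) {T : R}
    (hT : ∀ k, ∀ x ∈ peirceSet e k k, g x * T = 0) : T = 0 := by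
  refine eq_zero_of_forall_pel_mul_mul_pel (e := e) fun i j => ?_
  have hcol : ∀ k, ∀ x ∈ peirceSet e k k,
      g x * (pel e 0 * T * pel e j + pel e 1 * T * pel e j) = 0 := by
    intro k x hx
    rw [← add_mul, ← add_mul, ← Fin.sum_univ_two (pel e), sum_pel, one_mul, ← mul_assoc,
      hT k x hx, zero_mul]
  have hA := hg.2.2.1
  fin_cases i
  · exact (hA 0 j _ ⟨T, rfl⟩ _ ⟨T, rfl⟩ (hcol 0)).1 rfl
  · exact (hA 1 j _ ⟨T, rfl⟩ _ ⟨T, rfl⟩ (hcol 1)).2 rfl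

end AssumptionA

namespace IsMultSkewSemiDeriv

variable {R : Type*} [Ring R] {d g : R → R} {α : R ≃+* R}

lemma map_zero (hd : IsMultSkewSemiDeriv d g α) (hg : g 0 = 0) : d 0 = 0 := by
  simpa [hg] using hd.1 0 0

variable {ι : Type*} [Fintype ι]

lemma map_sum_sub_sum_map_mul (hd : IsMultSkewSemiDeriv d g α) (a : ι → R) (y : R) :
    (d (∑ i, a i) - ∑ i, d (a i)) * g y = d ((∑ i, a i) * y) - ∑ i, d (a i * y) := by
  rw [hd.1, sum_congr rfl fun i _ => hd.1 (a i) y, sum_add_distrib]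
  simp only [map_sum, sum_mul, sub_mul]
  abel

lemma mul_map_sum_sub_sum_map (hd : IsMultSkewSemiDeriv d g α) (a : ι → R) (y : R) :
    g y * (d (∑ i, a i) - ∑ i, d (a i)) = d (y * ∑ i, a i) - ∑ i, d (y * a i) := by
  rw [hd.2.1, sum_congr rfl fun i _ => hd.2.1 y (a i), sum_add_distrib]
  simp only [map_sum, mul_sum, mul_sub]
  abel

variable {e : R}

lemma map_sum_of_forall_mul_right (hd : IsMultSkewSemiDeriv d g α) (hg : AssumptionA e g)
    (a : ι → R) (h : ∀ k, ∀ y ∈ peirceSet e k 1, d ((∑ i, a i) * y) = ∑ i, d (a i * y)) :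
    d (∑ i, a i) = ∑ i, d (a i) :=
  sub_eq_zero.1 <| hg.eq_zero_of_forall_mul_map_eq_zero fun k y hy => by
    rw [hd.map_sum_sub_sum_map_mul, h k y hy, sub_self]

lemma map_sum_of_forall_mul_left (hd : IsMultSkewSemiDeriv d g α) (hg : AssumptionA e g)
    (a : ι → R) (h : ∀ k, ∀ y ∈ peirceSet e k k, d (y * ∑ i, a i) = ∑ i, d (y * a i)) :
    d (∑ i, a i) = ∑ i, d (a i) :=
  sub_eq_zero.1 <| hg.eq_zero_of_forall_map_mul_eq_zero fun k y hy => by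
    rw [hd.mul_map_sum_sub_sum_map, h k y hy, sub_self]

lemma map_add_of_mem_peirceSet (hd : IsMultSkewSemiDeriv d g α) (he : e * e = e)
    (hg : AssumptionA e g) {j : Fin 2} {a b : R} (ha : a ∈ peirceSet e 0 j)
    (hb : b ∈ peirceSet e 1 j) : d (a + b) = d a + d b := by
  have d0 := hd.map_zero hg.1
  simpa using hd.map_sum_of_forall_mul_left hg ![a, b] fun k y hy => by
    simp only [Fin.sum_univ_two, Matrix.cons_val_zero, Matrix.cons_val_one, mul_add]
    fin_cases k
    · simp [mul_eq_zero_of_mem_peirceSet he (by decide) hy hb, d0]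
    · simp [mul_eq_zero_of_mem_peirceSet he (by decide) hy ha, d0]

end IsMultSkewSemiDeriv

theorem stmt_5_general {R : Type*} [Ring R] (e : R) (he : e * e = e)
    (g : R → R) (hg : AssumptionA e g) (α : R ≃+* R) (d : R → R)
    (hd : IsMultSkewSemiDeriv d g α) :
    ∀ a11 ∈ peirceSet e 0 0, ∀ a12 ∈ peirceSet e 0 1, ∀ a21 ∈ peirceSet e 1 0,
      ∀ a22 ∈ peirceSet e 1 1,
        d (a11 + a12 + a21 + a22) = d a11 + d a12 + d a21 + d a22 := by
  intro a11 h11 a12 h12 a21 h21 a22 h22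
  have d0 := hd.map_zero hg.1
  simpa [Fin.sum_univ_four] using hd.map_sum_of_forall_mul_right hg ![a11, a12, a21, a22]
    fun k y hy => by
      simp only [Fin.sum_univ_four, Matrix.cons_val, add_mul]
      fin_cases k
      · rw [mul_eq_zero_of_mem_peirceSet he (by decide) h12 hy,
          mul_eq_zero_of_mem_peirceSet he (by decide) h22 hy, d0]
        simp only [add_zero]
        rw [hd.map_add_of_mem_peirceSet he hg (mul_mem_peirceSet he h11 hy)
          (mul_mem_peirceSet he h21 hy)]
      · rw [mul_eq_zero_of_mem_peirceSet he (by decide) h11 hy,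
          mul_eq_zero_of_mem_peirceSet he (by decide) h21 hy, d0]
        simp only [add_zero, zero_add]
        rw [hd.map_add_of_mem_peirceSet he hg (mul_mem_peirceSet he h12 hy)
          (mul_mem_peirceSet he h22 hy)]

theorem stmt_5 {R : Type*} [Ring R] (e : R) (he : e * e = e) (he0 : e ≠ 0) (he1 : e ≠ 1)
    (g : R → R) (hg : AssumptionA e g) (α : R ≃+* R) (d : R → R)
    (hd : IsMultSkewSemiDeriv d g α) :
    ∀ a11 ∈ peirceSet e 0 0, ∀ a12 ∈ peirceSet e 0 1, ∀ a21 ∈ peirceSet e 1 0,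
      ∀ a22 ∈ peirceSet e 1 1,
        d (a11 + a12 + a21 + a22) = d a11 + d a12 + d a21 + d a22 :=
  stmt_5_general e he g hg α d hd
end

section
/- Let R be a prime ring with identity 1 ≠ 0 containing an idempotent e with e ≠ 0 and e ≠ 1. If d : R → R is a multiplicative skew semi-derivation on R whose associated map g is a ring endomorphism of R satisfying g(e) = e, then d is additive on R. -/
theorem stmt_7 {R : Type*} [Ring R] (h10 : (1 : R) ≠ 0)
    (hprime : ∀ a b : R, (∀ r : R, a * r * b = 0) → a = 0 ∨ b = 0)
    (e : R) (he : e * e = e) (he0 : e ≠ 0) (he1 : e ≠ 1)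
    (g : R →+* R) (hge : g e = e) (α : R ≃+* R) (d : R → R)
    (hd : IsMultSkewSemiDeriv d (⇑g) α) :
    ∀ x y : R, d (x + y) = d x + d y := by
  obtain ⟨hd1, hd2, -⟩ := hd
  -- basic idempotent facts
  have hee2 : e * (1 - e) = 0 := by rw [mul_sub, mul_one, he, sub_self]
  have h2ee : (1 - e) * e = 0 := by rw [sub_mul, one_mul, he, sub_self]
  have hff : (1 - e) * (1 - e) = 1 - e := by
    rw [sub_mul, one_mul, mul_sub, mul_one, he]; abel
  have hsum : e + (1 - e) = 1 := by abel
  have hg2 : g (1 - e) = 1 - e := by rw [map_sub, map_one, hge]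
  have hαsum : α e + α (1 - e) = 1 := by rw [← map_add, hsum, map_one]
  have he2ne : (1 : R) - e ≠ 0 := fun h => he1 (by rwa [sub_eq_zero, eq_comm] at h)
  have hαe : α e ≠ 0 := fun h => he0 (α.injective (by rw [h, map_zero]))
  have hαe2 : α (1 - e) ≠ 0 := fun h => he2ne (α.injective (by rw [h, map_zero]))
  have hd0 : d 0 = 0 := by
    have h := hd1 0 0
    simpa using h
  -- the key quasi-additivity identities
  have KR : ∀ a b x : R, d ((a + b) * x) = d (a * x) + d (b * x) →
      (d (a + b) - d a - d b) * α x = 0 := by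
    intro a b x h
    have h1 := hd2 (a + b) x
    have h2 := hd2 a x
    have h3 := hd2 b x
    rw [map_add] at h1
    have key : (d (a + b) - d a - d b) * α x =
        (d (a + b) * α x + (g a + g b) * d x)
          - ((d a * α x + g a * d x) + (d b * α x + g b * d x)) := by
      noncomm_ring
    rw [key, ← h1, ← h2, ← h3, ← h, sub_self]
  have KL : ∀ a b x : R, d (x * (a + b)) = d (x * a) + d (x * b) →
      α x * (d (a + b) - d a - d b) = 0 := by
    intro a b x h
    have h1 := hd1 x (a + b)
    have h2 := hd1 x a
    have h3 := hd1 x b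
    rw [map_add] at h1
    have key : α x * (d (a + b) - d a - d b) =
        (d x * (g a + g b) + α x * d (a + b))
          - ((d x * g a + α x * d a) + (d x * g b + α x * d b)) := by
      noncomm_ring
    rw [key, ← h1, ← h2, ← h3, ← h, sub_self]
  have KR0 : ∀ a b x : R, a * x = 0 → (d (a + b) - d a - d b) * α x = 0 := by
    intro a b x hax
    apply KR
    rw [add_mul, hax, zero_add, hd0, zero_add]
  have KR0' : ∀ a b x : R, b * x = 0 → (d (a + b) - d a - d b) * α x = 0 := by
    intro a b x hbx
    apply KR
    rw [add_mul, hbx, add_zero, hd0, add_zero]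
  have KL0 : ∀ a b x : R, x * a = 0 → α x * (d (a + b) - d a - d b) = 0 := by
    intro a b x hax
    apply KL
    rw [mul_add, hax, zero_add, hd0, zero_add]
  have KL0' : ∀ a b x : R, x * b = 0 → α x * (d (a + b) - d a - d b) = 0 := by
    intro a b x hbx
    apply KL
    rw [mul_add, hbx, add_zero, hd0, add_zero]
  -- splitting lemmas
  have LemA : ∀ a b : R, a * (1 - e) = 0 → b * e = 0 → d (a + b) = d a + d b := by
    intro a b ha hb
    have h1 := KR0' a b e hb
    have h2 := KR0 a b (1 - e) ha
    have h3 : (d (a + b) - d a - d b) * 1 = 0 := by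
      rw [← hαsum, mul_add, h1, h2, add_zero]
    rw [mul_one, sub_sub, sub_eq_zero] at h3
    exact h3
  have LemA' : ∀ a b : R, (1 - e) * a = 0 → e * b = 0 → d (a + b) = d a + d b := by
    intro a b ha hb
    have h1 := KL0' a b e hb
    have h2 := KL0 a b (1 - e) ha
    have h3 : (1 : R) * (d (a + b) - d a - d b) = 0 := by
      rw [← hαsum, add_mul, h1, h2, add_zero]
    rw [one_mul, sub_sub, sub_eq_zero] at h3
    exact h3
  -- additivity on R₁₂
  have Lem12 : ∀ a b : R, e * a = a → a * (1 - e) = a → e * b = b → b * (1 - e) = b →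
      d (a + b) = d a + d b := by
    intro a b ha1 ha2 hb1 hb2
    have hae : a * e = 0 := by
      calc a * e = a * (1 - e) * e := by rw [ha2]
        _ = a * ((1 - e) * e) := by rw [mul_assoc]
        _ = 0 := by rw [h2ee, mul_zero]
    have h2b : (1 - e) * b = 0 := by
      calc (1 - e) * b = (1 - e) * (e * b) := by rw [hb1]
        _ = (1 - e) * e * b := by rw [mul_assoc]
        _ = 0 := by rw [h2ee, zero_mul]
    have hab : a * b = 0 := by
      calc a * b = a * (e * b) := by rw [hb1]
        _ = a * e * b := by rw [mul_assoc]
        _ = 0 := by rw [hae, zero_mul]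
    have key : a + b = (e + a) * (b + (1 - e)) := by
      rw [add_mul, mul_add, mul_add, hee2, hab, hb1, ha2]; abel
    have hda : d (e + a) = d e + d a := LemA e a hee2 hae
    have hdb : d (b + (1 - e)) = d b + d (1 - e) := LemA' b (1 - e) h2b hee2
    have h := hd2 (e + a) (b + (1 - e))
    rw [← key, hda, hdb, map_add g, hge, map_add α] at h
    have F1 : d b = d e * α b + e * d b := by
      have h' := hd2 e b; rwa [hb1, hge] at h'
    have F2 : (0 : R) = d e * α (1 - e) + e * d (1 - e) := by
      have h' := hd2 e (1 - e); rwa [hee2, hd0, hge] at h'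
    have F3 : (0 : R) = d a * α b + g a * d b := by
      have h' := hd2 a b; rwa [hab, hd0] at h'
    have F4 : d a = d a * α (1 - e) + g a * d (1 - e) := by
      have h' := hd2 a (1 - e); rwa [ha2] at h'
    have expand : (d e + d a) * (α b + α (1 - e)) + (e + g a) * (d b + d (1 - e)) =
        (d e * α b + e * d b) + (d e * α (1 - e) + e * d (1 - e)) +
        ((d a * α b + g a * d b) + (d a * α (1 - e) + g a * d (1 - e))) := by
      noncomm_ring
    rw [h, expand, ← F1, ← F2, ← F3, ← F4]
    abel
  -- additivity on R₂₁
  have Lem21 : ∀ a b : R, (1 - e) * a = a → a * e = a → (1 - e) * b = b → b * e = b →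
      d (a + b) = d a + d b := by
    intro a b ha1 ha2 hb1 hb2
    have hea : e * a = 0 := by
      calc e * a = e * ((1 - e) * a) := by rw [ha1]
        _ = e * (1 - e) * a := by rw [mul_assoc]
        _ = 0 := by rw [hee2, zero_mul]
    have hb2e : b * (1 - e) = 0 := by
      calc b * (1 - e) = b * e * (1 - e) := by rw [hb2]
        _ = b * (e * (1 - e)) := by rw [mul_assoc]
        _ = 0 := by rw [hee2, mul_zero]
    have hba : b * a = 0 := by
      calc b * a = b * ((1 - e) * a) := by rw [ha1]
        _ = b * (1 - e) * a := by rw [mul_assoc]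
        _ = 0 := by rw [hb2e, zero_mul]
    have key : a + b = (b + (1 - e)) * (e + a) := by
      rw [add_mul, mul_add, mul_add, h2ee, hba, hb2, ha1]; abel
    have hdb : d (b + (1 - e)) = d b + d (1 - e) := LemA b (1 - e) hb2e h2ee
    have hda : d (e + a) = d e + d a := LemA' e a h2ee hea
    have h := hd1 (b + (1 - e)) (e + a)
    rw [← key, hda, hdb, map_add g, hge, map_add α] at h
    have F1 : d b = d b * e + α b * d e := by
      have h' := hd1 b e; rwa [hb2, hge] at h'
    have F2 : (0 : R) = d b * g a + α b * d a := by
      have h' := hd1 b a; rwa [hba, hd0] at h'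
    have F3 : (0 : R) = d (1 - e) * e + α (1 - e) * d e := by
      have h' := hd1 (1 - e) e; rwa [h2ee, hd0, hge] at h'
    have F4 : d a = d (1 - e) * g a + α (1 - e) * d a := by
      have h' := hd1 (1 - e) a; rwa [ha1] at h'
    have expand : (d b + d (1 - e)) * (e + g a) + (α b + α (1 - e)) * (d e + d a) =
        (d b * e + α b * d e) + (d b * g a + α b * d a) +
        ((d (1 - e) * e + α (1 - e) * d e) + (d (1 - e) * g a + α (1 - e) * d a)) := by
      noncomm_ring
    rw [h, expand, ← F1, ← F2, ← F3, ← F4]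
    abel
  -- additivity on R₁₁
  have Lem11 : ∀ a b : R, e * a = a → a * e = a → e * b = b → b * e = b →
      d (a + b) = d a + d b := by
    intro a b ha1 ha2 hb1 hb2
    have hae2 : a * (1 - e) = 0 := by
      calc a * (1 - e) = a * e * (1 - e) := by rw [ha2]
        _ = a * (e * (1 - e)) := by rw [mul_assoc]
        _ = 0 := by rw [hee2, mul_zero]
    have hbe2 : b * (1 - e) = 0 := by
      calc b * (1 - e) = b * e * (1 - e) := by rw [hb2]
        _ = b * (e * (1 - e)) := by rw [mul_assoc]
        _ = 0 := by rw [hee2, mul_zero]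
    have hTp : ∀ r : R, (d (a + b) - d a - d b) * α e * r * α (1 - e) = 0 := by
      intro s
      obtain ⟨r, rfl⟩ := α.surjective s
      have h12 := Lem12 (a * (e * r * (1 - e))) (b * (e * r * (1 - e)))
        (by rw [← mul_assoc, ha1])
        (by simp only [mul_assoc, hff])
        (by rw [← mul_assoc, hb1])
        (by simp only [mul_assoc, hff])
      have h := KR a b (e * r * (1 - e)) (by rw [add_mul]; exact h12)
      rw [map_mul, map_mul, ← mul_assoc, ← mul_assoc] at h
      exact h
    have hTe : (d (a + b) - d a - d b) * α e = 0 := by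
      rcases hprime _ _ hTp with h | h
      · exact h
      · exact absurd h hαe2
    have hTq : ∀ r : R, (d (a + b) - d a - d b) * α (1 - e) * r * α (1 - e) = 0 := by
      intro s
      obtain ⟨r, rfl⟩ := α.surjective s
      have h := KR0 a b ((1 - e) * r * (1 - e))
        (by rw [← mul_assoc, ← mul_assoc, hae2, zero_mul, zero_mul])
      rw [map_mul, map_mul, ← mul_assoc, ← mul_assoc] at h
      exact h
    have hTe2 : (d (a + b) - d a - d b) * α (1 - e) = 0 := by
      rcases hprime _ _ hTq with h | h
      · exact h
      · exact absurd h hαe2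
    have h3 : (d (a + b) - d a - d b) * 1 = 0 := by
      rw [← hαsum, mul_add, hTe, hTe2, add_zero]
    rw [mul_one, sub_sub, sub_eq_zero] at h3
    exact h3
  -- additivity on R₂₂
  have Lem22 : ∀ a b : R, (1 - e) * a = a → a * (1 - e) = a → (1 - e) * b = b →
      b * (1 - e) = b → d (a + b) = d a + d b := by
    intro a b ha1 ha2 hb1 hb2
    have hae : a * e = 0 := by
      calc a * e = a * (1 - e) * e := by rw [ha2]
        _ = a * ((1 - e) * e) := by rw [mul_assoc]
        _ = 0 := by rw [h2ee, mul_zero]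
    have hbe : b * e = 0 := by
      calc b * e = b * (1 - e) * e := by rw [hb2]
        _ = b * ((1 - e) * e) := by rw [mul_assoc]
        _ = 0 := by rw [h2ee, mul_zero]
    have hTq : ∀ r : R, (d (a + b) - d a - d b) * α (1 - e) * r * α e = 0 := by
      intro s
      obtain ⟨r, rfl⟩ := α.surjective s
      have h21 := Lem21 (a * ((1 - e) * r * e)) (b * ((1 - e) * r * e))
        (by rw [← mul_assoc, ha1])
        (by simp only [mul_assoc, he])
        (by rw [← mul_assoc, hb1])
        (by simp only [mul_assoc, he])
      have h := KR a b ((1 - e) * r * e) (by rw [add_mul]; exact h21)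
      rw [map_mul, map_mul, ← mul_assoc, ← mul_assoc] at h
      exact h
    have hTe2 : (d (a + b) - d a - d b) * α (1 - e) = 0 := by
      rcases hprime _ _ hTq with h | h
      · exact h
      · exact absurd h hαe
    have hTp : ∀ r : R, (d (a + b) - d a - d b) * α e * r * α e = 0 := by
      intro s
      obtain ⟨r, rfl⟩ := α.surjective s
      have h := KR0 a b (e * r * e)
        (by rw [← mul_assoc, ← mul_assoc, hae, zero_mul, zero_mul])
      rw [map_mul, map_mul, ← mul_assoc, ← mul_assoc] at h
      exact h
    have hTe : (d (a + b) - d a - d b) * α e = 0 := by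
      rcases hprime _ _ hTp with h | h
      · exact h
      · exact absurd h hαe
    have h3 : (d (a + b) - d a - d b) * 1 = 0 := by
      rw [← hαsum, mul_add, hTe, hTe2, add_zero]
    rw [mul_one, sub_sub, sub_eq_zero] at h3
    exact h3
  -- right and left splitting of d
  have hsplitR : ∀ w : R, d w = d (w * e) + d (w * (1 - e)) := by
    intro w
    have h := LemA (w * e) (w * (1 - e))
      (by rw [mul_assoc, hee2, mul_zero]) (by rw [mul_assoc, h2ee, mul_zero])
    rwa [← mul_add, hsum, mul_one] at h
  have hsplitL : ∀ w : R, d w = d (e * w) + d ((1 - e) * w) := by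
    intro w
    have h := LemA' (e * w) ((1 - e) * w)
      (by rw [← mul_assoc, h2ee, zero_mul]) (by rw [← mul_assoc, hee2, zero_mul])
    rwa [← add_mul, hsum, one_mul] at h
  -- additivity on eR and (1-e)R
  have LemTop : ∀ u v : R, e * u = u → e * v = v → d (u + v) = d u + d v := by
    intro u v hu hv
    have h11 := Lem11 (u * e) (v * e)
      (by rw [← mul_assoc, hu]) (by rw [mul_assoc, he])
      (by rw [← mul_assoc, hv]) (by rw [mul_assoc, he])
    have h12 := Lem12 (u * (1 - e)) (v * (1 - e))
      (by rw [← mul_assoc, hu]) (by rw [mul_assoc, hff])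
      (by rw [← mul_assoc, hv]) (by rw [mul_assoc, hff])
    calc d (u + v) = d ((u + v) * e) + d ((u + v) * (1 - e)) := hsplitR _
      _ = d (u * e + v * e) + d (u * (1 - e) + v * (1 - e)) := by rw [add_mul, add_mul]
      _ = (d (u * e) + d (v * e)) + (d (u * (1 - e)) + d (v * (1 - e))) := by rw [h11, h12]
      _ = (d (u * e) + d (u * (1 - e))) + (d (v * e) + d (v * (1 - e))) := by abel
      _ = d u + d v := by rw [← hsplitR, ← hsplitR]
  have LemBot : ∀ u v : R, (1 - e) * u = u → (1 - e) * v = v → d (u + v) = d u + d v := by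
    intro u v hu hv
    have h21 := Lem21 (u * e) (v * e)
      (by rw [← mul_assoc, hu]) (by rw [mul_assoc, he])
      (by rw [← mul_assoc, hv]) (by rw [mul_assoc, he])
    have h22 := Lem22 (u * (1 - e)) (v * (1 - e))
      (by rw [← mul_assoc, hu]) (by rw [mul_assoc, hff])
      (by rw [← mul_assoc, hv]) (by rw [mul_assoc, hff])
    calc d (u + v) = d ((u + v) * e) + d ((u + v) * (1 - e)) := hsplitR _
      _ = d (u * e + v * e) + d (u * (1 - e) + v * (1 - e)) := by rw [add_mul, add_mul]
      _ = (d (u * e) + d (v * e)) + (d (u * (1 - e)) + d (v * (1 - e))) := by rw [h21, h22]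
      _ = (d (u * e) + d (u * (1 - e))) + (d (v * e) + d (v * (1 - e))) := by abel
      _ = d u + d v := by rw [← hsplitR, ← hsplitR]
  -- final assembly
  intro x y
  have hTop := LemTop (e * x) (e * y)
    (by rw [← mul_assoc, he]) (by rw [← mul_assoc, he])
  have hBot := LemBot ((1 - e) * x) ((1 - e) * y)
    (by rw [← mul_assoc, hff]) (by rw [← mul_assoc, hff])
  calc d (x + y) = d (e * (x + y)) + d ((1 - e) * (x + y)) := hsplitL _
    _ = d (e * x + e * y) + d ((1 - e) * x + (1 - e) * y) := by rw [mul_add, mul_add]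
    _ = (d (e * x) + d (e * y)) + (d ((1 - e) * x) + d ((1 - e) * y)) := by rw [hTop, hBot]
    _ = (d (e * x) + d ((1 - e) * x)) + (d (e * y) + d ((1 - e) * y)) := by abel
    _ = d x + d y := by rw [← hsplitL, ← hsplitL]
end

section
/- Let R be a ring with identity and a nontrivial idempotent e, and let g : R → R satisfy Assumption B. If d : R → R is a multiplicative skew semi-derivation with associated map g and automorphism α, then d is additive on R. -/
theorem stmt_9 {R : Type*} [Ring R] (e : R) (he : e * e = e) (he0 : e ≠ 0) (he1 : e ≠ 1)
    (g : R → R) (hg : AssumptionB e g) (α : R ≃+* R) (d : R → R)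
    (hd : IsMultSkewSemiDeriv d g α) :
    ∀ x y : R, d (x + y) = d x + d y := by
  obtain ⟨hd1, hd2, hd3⟩ := hd
  obtain ⟨hg0, hB1, hB2⟩ := hg
  -- d 0 = 0
  have hd0 : d 0 = 0 := by
    have h := hd1 0 0
    rw [mul_zero, hg0, map_zero, mul_zero, zero_mul, add_zero] at h
    exact h
  have he2 : (1 - e) * (1 - e) = 1 - e := by
    have h : (1 - e) * (1 - e) = 1 - e - (e - e * e) := by noncomm_ring
    rw [h, he, sub_self, sub_zero]
  -- key cancellation: if c right-annihilates g(R_ii) then c = 0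
  have key : ∀ i : Fin 2, ∀ c : R, (∀ x ∈ peirceSet e i i, c * g x = 0) → c = 0 := by
    intro i c hc
    have h1 : e * c = 0 := by
      have h := hB1 i 0 (e * c * e) ⟨c, by simp [pel]⟩ (e * c * (1 - e)) ⟨c, by simp [pel]⟩ ?_
      · have hs : e * c * e + e * c * (1 - e) = e * c := by noncomm_ring
        rw [hs] at h; exact h
      · intro x hx
        have hs : e * c * e + e * c * (1 - e) = e * c := by noncomm_ring
        rw [hs, mul_assoc, hc x hx, mul_zero]
    have h2 : (1 - e) * c = 0 := by
      have h := hB1 i 1 ((1 - e) * c * e) ⟨c, by simp [pel]⟩ ((1 - e) * c * (1 - e))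
        ⟨c, by simp [pel]⟩ ?_
      · have hs : (1 - e) * c * e + (1 - e) * c * (1 - e) = (1 - e) * c := by noncomm_ring
        rw [hs] at h; exact h
      · intro x hx
        have hs : (1 - e) * c * e + (1 - e) * c * (1 - e) = (1 - e) * c := by noncomm_ring
        rw [hs, mul_assoc, hc x hx, mul_zero]
    have h3 : c = e * c + (1 - e) * c := by noncomm_ring
    rw [h3, h1, h2, add_zero]
  -- if d is additive after right multiplication by everything in R_ii, then d is additive
  have cancel : ∀ i : Fin 2, ∀ u v : R,
      (∀ x ∈ peirceSet e i i, d ((u + v) * x) = d (u * x) + d (v * x)) →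
      d (u + v) = d u + d v := by
    intro i u v h
    have hz : d (u + v) - d u - d v = 0 := by
      apply key i
      intro x hx
      have e4 := h x hx
      rw [hd1 (u + v) x, hd1 u x, hd1 v x, map_add] at e4
      have hr : (d (u + v) - d u - d v) * g x =
          (d (u + v) * g x + (α u + α v) * d x) -
            ((d u * g x + α u * d x) + (d v * g x + α v * d x)) := by noncomm_ring
      rw [hr, e4, sub_self]
    rw [sub_sub] at hz
    exact sub_eq_zero.mp hz
  -- elements of Re kill R_11, elements of R(1-e) kill R_00
  have annRe : ∀ u : R, u * e = u → ∀ x ∈ peirceSet e 1 1, u * x = 0 := by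
    rintro u hu x ⟨r, rfl⟩
    have hpel : pel e 1 = 1 - e := by simp [pel]
    rw [hpel]
    have hue : u * (1 - e) = 0 := by rw [mul_sub, mul_one, hu, sub_self]
    rw [← mul_assoc, ← mul_assoc, hue, zero_mul, zero_mul]
  have annRe2 : ∀ u : R, u * (1 - e) = u → ∀ x ∈ peirceSet e 0 0, u * x = 0 := by
    rintro u hu x ⟨r, rfl⟩
    have hpel : pel e 0 = e := by simp [pel]
    rw [hpel]
    have hue : u * e = 0 := by
      rw [← hu, mul_assoc, sub_mul, one_mul, he, sub_self, mul_zero]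
    rw [← mul_assoc, ← mul_assoc, hue, zero_mul, zero_mul]
  -- additivity on Re
  have addRe : ∀ u v : R, u * e = u → v * e = v → d (u + v) = d u + d v := by
    intro u v hu hv
    apply cancel 1
    intro x hx
    have huv : (u + v) * e = u + v := by rw [add_mul, hu, hv]
    rw [annRe u hu x hx, annRe v hv x hx, annRe (u + v) huv x hx, hd0, add_zero]
  -- additivity on R(1-e)
  have addRe2 : ∀ u v : R, u * (1 - e) = u → v * (1 - e) = v → d (u + v) = d u + d v := by
    intro u v hu hv
    apply cancel 0
    intro x hx
    have huv : (u + v) * (1 - e) = u + v := by rw [add_mul, hu, hv]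
    rw [annRe2 u hu x hx, annRe2 v hv x hx, annRe2 (u + v) huv x hx, hd0, add_zero]
  -- mixed additivity
  have addMix : ∀ u v : R, u * e = u → v * (1 - e) = v → d (u + v) = d u + d v := by
    intro u v hu hv
    apply cancel 1
    intro x hx
    have h1 : (u + v) * x = v * x := by rw [add_mul, annRe u hu x hx, zero_add]
    rw [h1, annRe u hu x hx, hd0, zero_add]
  -- conclude
  intro x y
  have hxd : ∀ z : R, z = z * e + z * (1 - e) := by intro z; noncomm_ring
  have hre : ∀ z : R, (z * e) * e = z * e := by intro z; rw [mul_assoc, he]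
  have hre2 : ∀ z : R, (z * (1 - e)) * (1 - e) = z * (1 - e) := by
    intro z; rw [mul_assoc, he2]
  calc d (x + y) = d ((x + y) * e + (x + y) * (1 - e)) := by rw [← hxd]
    _ = d ((x + y) * e) + d ((x + y) * (1 - e)) := addMix _ _ (hre _) (hre2 _)
    _ = d (x * e + y * e) + d (x * (1 - e) + y * (1 - e)) := by rw [add_mul, add_mul]
    _ = (d (x * e) + d (y * e)) + (d (x * (1 - e)) + d (y * (1 - e))) := by
        rw [addRe _ _ (hre x) (hre y), addRe2 _ _ (hre2 x) (hre2 y)]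
    _ = (d (x * e) + d (x * (1 - e))) + (d (y * e) + d (y * (1 - e))) := by abel
    _ = d (x * e + x * (1 - e)) + d (y * e + y * (1 - e)) := by
        rw [addMix _ _ (hre x) (hre2 x), addMix _ _ (hre y) (hre2 y)]
    _ = d x + d y := by rw [← hxd, ← hxd]
end

section
/- Let R be a ring with identity and a nontrivial idempotent e, let g : R → R satisfy Assumption B, and let d : R → R be a multiplicative skew semi-derivation with associated map g and automorphism α. Then for all a₁₁ ∈ R₁₁, b₁₂ ∈ R₁₂, c₂₁ ∈ R₂₁: (i) d(a₁₁ + b₁₂) = d(a₁₁) + d(b₁₂); (ii) d(a₁₁ + c₂₁) = d(a₁₁) + d(c₂₁). -/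
theorem stmt_10 {R : Type*} [Ring R] (e : R) (he : e * e = e) (he0 : e ≠ 0) (he1 : e ≠ 1)
    (g : R → R) (hg : AssumptionB e g) (α : R ≃+* R) (d : R → R)
    (hd : IsMultSkewSemiDeriv d g α) :
    ∀ a11 ∈ peirceSet e 0 0, ∀ b12 ∈ peirceSet e 0 1, ∀ c21 ∈ peirceSet e 1 0,
      d (a11 + b12) = d a11 + d b12 ∧
      d (a11 + c21) = d a11 + d c21 := by
  obtain ⟨hd1, hd2, hd3⟩ := hd
  obtain ⟨hg0, hgB1, hgB2⟩ := hg
  have hd0 : d 0 = 0 := by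
    have h := hd1 0 0
    rw [mul_zero, hg0, mul_zero, map_zero, zero_mul, zero_add] at h
    exact h
  have hpel0 : pel e 0 = e := rfl
  have hpel1 : pel e 1 = 1 - e := rfl
  have he12 : e * (1 - e) = 0 := by rw [mul_sub, mul_one, he, sub_self]
  have h1z : ∀ z : R, e * ((1 - e) * z) = 0 := fun z => by
    rw [← mul_assoc, he12, zero_mul]
  have hsum01 : pel e 0 + pel e 1 = 1 := by rw [hpel0, hpel1]; abel
  have key : ∀ T : R, (∀ x ∈ peirceSet e 1 1, T * g x = 0) → T = 0 := by
    intro T hT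
    have hj : ∀ j : Fin 2, pel e j * T = 0 := by
      intro j
      have hmem0 : pel e j * T * pel e 0 ∈ peirceSet e j 0 := ⟨T, rfl⟩
      have hmem1 : pel e j * T * pel e 1 ∈ peirceSet e j 1 := ⟨T, rfl⟩
      have h := hgB1 1 j _ hmem0 _ hmem1
      have hsum : pel e j * T * pel e 0 + pel e j * T * pel e 1 = pel e j * T := by
        rw [mul_assoc, mul_assoc, ← mul_add, ← mul_add, hsum01, mul_one]
      rw [hsum] at h
      exact h (fun x hx => by rw [mul_assoc, hT x hx, mul_zero])
    have h0 := hj 0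
    have h1 := hj 1
    rw [hpel0] at h0
    rw [hpel1] at h1
    have hone : (e + (1 - e)) = (1 : R) := by abel
    have hT' : (e + (1 - e)) * T = 0 := by rw [add_mul, h0, h1, add_zero]
    rwa [hone, one_mul] at hT'
  rintro a11 ⟨r, ha⟩ b12 ⟨s, hb⟩ c21 ⟨t, hc⟩
  rw [hpel0] at ha hb
  rw [hpel1] at hb hc
  rw [hpel0] at hc
  -- ha : a11 = e * r * e, hb : b12 = e * s * (1-e), hc : c21 = (1-e) * t * e
  constructor
  · have hT : d (a11 + b12) - d a11 - d b12 = 0 := by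
      apply key
      rintro x ⟨u, hx⟩
      rw [hpel1] at hx
      have hax : a11 * x = 0 := by
        rw [ha, hx]; simp only [mul_assoc]; rw [h1z, mul_zero, mul_zero]
      have habx : (a11 + b12) * x = b12 * x := by rw [add_mul, hax, zero_add]
      have h2 : d a11 * g x + α a11 * d x = 0 := by rw [← hd1 a11 x, hax, hd0]
      have h1' := hd1 (a11 + b12) x
      rw [habx, hd1 b12 x, map_add, add_mul, ← add_assoc] at h1'
      have h3 := add_right_cancel h1'
      rw [eq_neg_of_add_eq_zero_right h2, ← sub_eq_add_neg] at h3
      rw [sub_mul, sub_mul, h3]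
      exact sub_self _
    rw [sub_sub, sub_eq_zero] at hT
    exact hT
  · have hT : d (a11 + c21) - d a11 - d c21 = 0 := by
      apply key
      rintro x ⟨u, hx⟩
      rw [hpel1] at hx
      have hax : a11 * x = 0 := by
        rw [ha, hx]; simp only [mul_assoc]; rw [h1z, mul_zero, mul_zero]
      have hcx : c21 * x = 0 := by
        rw [hc, hx]; simp only [mul_assoc]; rw [h1z, mul_zero, mul_zero]
      have hacx : (a11 + c21) * x = 0 := by rw [add_mul, hax, hcx, add_zero]
      have h2a : d a11 * g x + α a11 * d x = 0 := by rw [← hd1 a11 x, hax, hd0]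
      have h2c : d c21 * g x + α c21 * d x = 0 := by rw [← hd1 c21 x, hcx, hd0]
      have h4 : d (a11 + c21) * g x + α (a11 + c21) * d x = 0 := by
        rw [← hd1 (a11 + c21) x, hacx, hd0]
      rw [map_add, add_mul, eq_neg_of_add_eq_zero_right h2a,
        eq_neg_of_add_eq_zero_right h2c] at h4
      have h5 := eq_neg_of_add_eq_zero_left h4
      rw [neg_add, neg_neg, neg_neg] at h5
      rw [sub_mul, sub_mul, sub_sub, sub_eq_zero]
      exact h5
    rw [sub_sub, sub_eq_zero] at hT
    exact hT
end

section
/- Let R be a ring with identity and a nontrivial idempotent e, let g : R → R satisfy Assumption B, and let d : R → R be a multiplicative skew semi-derivation with associated map g and automorphism α. Then d is additive on each Peirce component: for all i, j ∈ {1,2} and all a, b ∈ R_ij, d(a + b) = d(a) + d(b). -/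
private lemma pel_orth {R : Type*} [Ring R] {e : R} (he : e * e = e) :
    ∀ j k : Fin 2, j ≠ k → pel e j * pel e k = 0 := by
  intro j k hjk
  fin_cases j <;> fin_cases k <;> simp_all [pel, mul_sub, sub_mul, he]

private lemma pel_sum {R : Type*} [Ring R] (e : R) : pel e 0 + pel e 1 = 1 := by
  simp [pel]

theorem stmt_11 {R : Type*} [Ring R] (e : R) (he : e * e = e) (he0 : e ≠ 0) (he1 : e ≠ 1)
    (g : R → R) (hg : AssumptionB e g) (α : R ≃+* R) (d : R → R)
    (hd : IsMultSkewSemiDeriv d g α) :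
    ∀ i j : Fin 2, ∀ a ∈ peirceSet e i j, ∀ b ∈ peirceSet e i j,
      d (a + b) = d a + d b := by
  obtain ⟨hd1, hd2, hd3⟩ := hd
  obtain ⟨hg0, hB2, hB3⟩ := hg
  have hd0 : d 0 = 0 := by
    have h := hd1 0 0
    rw [mul_zero] at h
    simpa [hg0] using h
  intro i j a ha b hb
  obtain ⟨r, rfl⟩ := ha
  obtain ⟨s, rfl⟩ := hb
  set a := pel e i * r * pel e j with ha'
  set b := pel e i * s * pel e j with hb'
  have hex : ∀ j : Fin 2, ∃ k : Fin 2, j ≠ k := by decide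
  obtain ⟨k, hjk⟩ := hex j
  set T := d (a + b) - d a - d b with hT
  have hzero : ∀ x ∈ peirceSet e k k, T * g x = 0 := by
    rintro x ⟨t, rfl⟩
    have horth := pel_orth he j k hjk
    have hax : a * (pel e k * t * pel e k) = 0 := by
      rw [ha']
      simp only [mul_assoc]
      rw [← mul_assoc (pel e j) (pel e k), horth, zero_mul, mul_zero, mul_zero]
    have hbx : b * (pel e k * t * pel e k) = 0 := by
      rw [hb']
      simp only [mul_assoc]
      rw [← mul_assoc (pel e j) (pel e k), horth, zero_mul, mul_zero, mul_zero]
    have habx : (a + b) * (pel e k * t * pel e k) = 0 := by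
      rw [add_mul, hax, hbx, add_zero]
    have h1 : d a * g (pel e k * t * pel e k) + α a * d (pel e k * t * pel e k) = 0 := by
      rw [← hd1, hax, hd0]
    have h2 : d b * g (pel e k * t * pel e k) + α b * d (pel e k * t * pel e k) = 0 := by
      rw [← hd1, hbx, hd0]
    have h3 : d (a + b) * g (pel e k * t * pel e k)
        + α (a + b) * d (pel e k * t * pel e k) = 0 := by
      rw [← hd1, habx, hd0]
    have e1 := eq_neg_of_add_eq_zero_left h1
    have e2 := eq_neg_of_add_eq_zero_left h2
    have e3 := eq_neg_of_add_eq_zero_left h3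
    rw [hT, sub_mul, sub_mul, e3, e1, e2, map_add, add_mul]
    abel
  have hrow : ∀ p : Fin 2, pel e p * T = 0 := by
    intro p
    have hsum : pel e p * T * pel e 0 + pel e p * T * pel e 1 = pel e p * T := by
      rw [← mul_add, pel_sum, mul_one]
    have hcond : ∀ x ∈ peirceSet e k k,
        (pel e p * T * pel e 0 + pel e p * T * pel e 1) * g x = 0 := by
      intro x hx
      rw [hsum, mul_assoc, hzero x hx, mul_zero]
    have h := hB2 k p (pel e p * T * pel e 0) ⟨T, rfl⟩ (pel e p * T * pel e 1) ⟨T, rfl⟩ hcond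
    rwa [hsum] at h
  have hTzero : T = 0 := by
    calc T = (pel e 0 + pel e 1) * T := by rw [pel_sum, one_mul]
    _ = pel e 0 * T + pel e 1 * T := add_mul _ _ _
    _ = 0 := by rw [hrow 0, hrow 1, add_zero]
  rw [hT, sub_sub, sub_eq_zero] at hTzero
  exact hTzero
end

section
/- Let R be a ring with identity and a nontrivial idempotent e, let g : R → R satisfy Assumption A, and let f : R → R be a multiplicative generalized skew semi-derivation with associated map g, multiplicative skew semi-derivation d, and automorphism α. Then for all a₁₁ ∈ R₁₁, a₁₂ ∈ R₁₂, a₂₁ ∈ R₂₁, a₂₂ ∈ R₂₂: (i) f(a₁₁ + a₁₂) = f(a₁₁) + f(a₁₂); (ii) f(a₁₁ + a₂₁) = f(a₁₁) + f(a₂₁); (iii) f(a₂₂ + a₁₂) = f(a₂₂) + f(a₁₂); (iv) f(a₂₂ + a₂₁) = f(a₂₂) + f(a₂₁); (v) f(a₁₁ + a₂₂) = f(a₁₁) + f(a₂₂). -/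
private lemma pel0 {R : Type*} [Ring R] (e : R) : pel e 0 = e := rfl
private lemma pel1 {R : Type*} [Ring R] (e : R) : pel e 1 = 1 - e := rfl

private lemma cancel3 {G : Type*} [AddCommGroup G] {A B C X Y u v w : G}
    (e1 : u = A + (X + Y)) (e2 : v = B + X) (e3 : w = C + Y) (h : u = v + w) :
    A - B - C = 0 := by
  have hA : A = u - (X + Y) := eq_sub_of_add_eq e1.symm
  have hB : B = v - X := eq_sub_of_add_eq e2.symm
  have hC : C = w - Y := eq_sub_of_add_eq e3.symm
  rw [hA, hB, hC, h]; abel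

private lemma annR {R : Type*} [Ring R] {e : R} {g : R → R} (hg : AssumptionA e g) {t : R}
    (h0 : ∀ y ∈ peirceSet e 0 0, t * g y = 0)
    (h1 : ∀ y ∈ peirceSet e 1 1, t * g y = 0) : t = 0 := by
  obtain ⟨-, hA1, -⟩ := hg
  have hk : ∀ k : Fin 2, pel e k * t = 0 := by
    intro k
    have hsum : pel e k * t * pel e 0 + pel e k * t * pel e 1 = pel e k * t := by
      rw [pel0, pel1]; noncomm_ring
    have h00 := hA1 0 0 k (le_refl 0) (pel e k * t * pel e 0) ⟨t, rfl⟩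
        (pel e k * t * pel e 1) ⟨t, rfl⟩
        (fun x hx => by rw [hsum, mul_assoc, h0 x hx, mul_zero])
    have h11 := hA1 1 1 k (le_refl 1) (pel e k * t * pel e 0) ⟨t, rfl⟩
        (pel e k * t * pel e 1) ⟨t, rfl⟩
        (fun x hx => by rw [hsum, mul_assoc, h1 x hx, mul_zero])
    rw [← hsum, h00.1 rfl, h11.2 rfl, add_zero]
  have h0' := hk 0
  have h1' := hk 1
  rw [pel0] at h0'
  rw [pel1] at h1'
  have ht : t = e * t + (1 - e) * t := by noncomm_ring
  rw [ht, h0', h1', add_zero]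

private lemma annL {R : Type*} [Ring R] {e : R} {g : R → R} (hg : AssumptionA e g) {t : R}
    (h0 : ∀ y ∈ peirceSet e 0 0, g y * t = 0)
    (h1 : ∀ y ∈ peirceSet e 1 1, g y * t = 0) : t = 0 := by
  obtain ⟨-, -, hA2, -⟩ := hg
  have hk : ∀ j : Fin 2, t * pel e j = 0 := by
    intro j
    have hsum : pel e 0 * t * pel e j + pel e 1 * t * pel e j = t * pel e j := by
      rw [pel0, pel1]; noncomm_ring
    have h00 := hA2 0 j (pel e 0 * t * pel e j) ⟨t, rfl⟩
        (pel e 1 * t * pel e j) ⟨t, rfl⟩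
        (fun x hx => by rw [hsum, ← mul_assoc, h0 x hx, zero_mul])
    have h11 := hA2 1 j (pel e 0 * t * pel e j) ⟨t, rfl⟩
        (pel e 1 * t * pel e j) ⟨t, rfl⟩
        (fun x hx => by rw [hsum, ← mul_assoc, h1 x hx, zero_mul])
    rw [← hsum, h00.1 rfl, h11.2 rfl, add_zero]
  have h0' := hk 0
  have h1' := hk 1
  rw [pel0] at h0'
  rw [pel1] at h1'
  have ht : t = t * e + t * (1 - e) := by noncomm_ring
  rw [ht, h0', h1', add_zero]

private lemma addRgen {R : Type*} [Ring R] {e : R} {g : R → R} (hg : AssumptionA e g)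
    {α : R ≃+* R} {d f : R → R} (hf : IsMultGenSkewSemiDeriv f d g α)
    {p q : R} (hp : p * (1 - e) = 0) (hq : q * e = 0) :
    f (p + q) = f p + f q := by
  obtain ⟨F1, -, -⟩ := hf
  have hg0 : g 0 = 0 := hg.1
  have hf0 : f 0 = 0 := by simpa [hg0] using F1 0 0
  have key : f (p + q) - f p - f q = 0 := by
    refine annR hg (fun y hy => ?_) (fun y hy => ?_)
    · obtain ⟨r, rfl⟩ := hy
      rw [pel0]
      have hqy : q * (e * r * e) = 0 := by
        rw [← mul_assoc, ← mul_assoc, hq, zero_mul, zero_mul]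
      have hpy : (p + q) * (e * r * e) = p * (e * r * e) := by
        rw [add_mul, hqy, add_zero]
      have e1 := F1 (p + q) (e * r * e)
      rw [hpy, map_add, add_mul] at e1
      have e2 := F1 p (e * r * e)
      have e3 := F1 q (e * r * e)
      rw [hqy, hf0] at e3
      rw [sub_mul, sub_mul]
      exact cancel3 e1 e2 e3 (add_zero _).symm
    · obtain ⟨r, rfl⟩ := hy
      rw [pel1]
      have hpy : p * ((1 - e) * r * (1 - e)) = 0 := by
        rw [← mul_assoc, ← mul_assoc, hp, zero_mul, zero_mul]
      have hqy : (p + q) * ((1 - e) * r * (1 - e)) = q * ((1 - e) * r * (1 - e)) := by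
        rw [add_mul, hpy, zero_add]
      have e1 := F1 (p + q) ((1 - e) * r * (1 - e))
      rw [hqy, map_add, add_mul] at e1
      have e2 := F1 p ((1 - e) * r * (1 - e))
      rw [hpy, hf0] at e2
      have e3 := F1 q ((1 - e) * r * (1 - e))
      rw [sub_mul, sub_mul]
      exact cancel3 e1 e2 e3 (zero_add _).symm
  rw [sub_sub] at key
  exact sub_eq_zero.mp key

private lemma addLgen {R : Type*} [Ring R] {e : R} {g : R → R} (hg : AssumptionA e g)
    {α : R ≃+* R} {d f : R → R} (hf : IsMultGenSkewSemiDeriv f d g α)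
    {p q : R} (hp : (1 - e) * p = 0) (hq : e * q = 0) :
    f (p + q) = f p + f q := by
  obtain ⟨-, F2, -⟩ := hf
  have hg0 : g 0 = 0 := hg.1
  have hf0 : f 0 = 0 := by simpa [hg0] using F2 0 0
  have key : f (p + q) - f p - f q = 0 := by
    refine annL hg (fun y hy => ?_) (fun y hy => ?_)
    · obtain ⟨r, rfl⟩ := hy
      rw [pel0]
      have hqy : (e * r * e) * q = 0 := by
        rw [mul_assoc, hq, mul_zero]
      have hpy : (e * r * e) * (p + q) = (e * r * e) * p := by
        rw [mul_add, hqy, add_zero]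
      have e1 := F2 (e * r * e) (p + q)
      rw [hpy, map_add, mul_add, add_comm] at e1
      have e2 := F2 (e * r * e) p
      rw [add_comm] at e2
      have e3 := F2 (e * r * e) q
      rw [hqy, hf0, add_comm] at e3
      rw [mul_sub, mul_sub]
      exact cancel3 e1 e2 e3 (add_zero _).symm
    · obtain ⟨r, rfl⟩ := hy
      rw [pel1]
      have hpy : ((1 - e) * r * (1 - e)) * p = 0 := by
        rw [mul_assoc, hp, mul_zero]
      have hqy : ((1 - e) * r * (1 - e)) * (p + q) = ((1 - e) * r * (1 - e)) * q := by
        rw [mul_add, hpy, zero_add]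
      have e1 := F2 ((1 - e) * r * (1 - e)) (p + q)
      rw [hqy, map_add, mul_add, add_comm] at e1
      have e2 := F2 ((1 - e) * r * (1 - e)) p
      rw [hpy, hf0, add_comm] at e2
      have e3 := F2 ((1 - e) * r * (1 - e)) q
      rw [add_comm] at e3
      rw [mul_sub, mul_sub]
      exact cancel3 e1 e2 e3 (zero_add _).symm
  rw [sub_sub] at key
  exact sub_eq_zero.mp key

theorem stmt_14 {R : Type*} [Ring R] (e : R) (he : e * e = e) (he0 : e ≠ 0) (he1 : e ≠ 1)
    (g : R → R) (hg : AssumptionA e g) (α : R ≃+* R) (d f : R → R)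
    (hd : IsMultSkewSemiDeriv d g α)
    (hf : IsMultGenSkewSemiDeriv f d g α) :
    ∀ a11 ∈ peirceSet e 0 0, ∀ a12 ∈ peirceSet e 0 1, ∀ a21 ∈ peirceSet e 1 0,
      ∀ a22 ∈ peirceSet e 1 1,
        f (a11 + a12) = f a11 + f a12 ∧
        f (a11 + a21) = f a11 + f a21 ∧
        f (a22 + a12) = f a22 + f a12 ∧
        f (a22 + a21) = f a22 + f a21 ∧
        f (a11 + a22) = f a11 + f a22 := by
  have he2 : e * (1 - e) = 0 := by rw [mul_sub, mul_one, he, sub_self]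
  have he2' : (1 - e) * e = 0 := by rw [sub_mul, one_mul, he, sub_self]
  rintro a11 ⟨r11, rfl⟩ a12 ⟨r12, rfl⟩ a21 ⟨r21, rfl⟩ a22 ⟨r22, rfl⟩
  simp only [pel0, pel1]
  have h11r : (e * r11 * e) * (1 - e) = 0 := by rw [mul_assoc, he2, mul_zero]
  have h11l : (1 - e) * (e * r11 * e) = 0 := by
    rw [← mul_assoc, ← mul_assoc, he2', zero_mul, zero_mul]
  have h12r : (e * r12 * (1 - e)) * e = 0 := by rw [mul_assoc, he2', mul_zero]
  have h12l : (1 - e) * (e * r12 * (1 - e)) = 0 := by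
    rw [← mul_assoc, ← mul_assoc, he2', zero_mul, zero_mul]
  have h21r : ((1 - e) * r21 * e) * (1 - e) = 0 := by rw [mul_assoc, he2, mul_zero]
  have h21l : e * ((1 - e) * r21 * e) = 0 := by
    rw [← mul_assoc, ← mul_assoc, he2, zero_mul, zero_mul]
  have h22r : ((1 - e) * r22 * (1 - e)) * e = 0 := by rw [mul_assoc, he2', mul_zero]
  have h22l : e * ((1 - e) * r22 * (1 - e)) = 0 := by
    rw [← mul_assoc, ← mul_assoc, he2, zero_mul, zero_mul]
  refine ⟨addRgen hg hf h11r h12r, addLgen hg hf h11l h21l, ?_, ?_, addRgen hg hf h11r h22r⟩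
  · rw [add_comm ((1 - e) * r22 * (1 - e)) (e * r12 * (1 - e)),
      add_comm (f ((1 - e) * r22 * (1 - e))) (f (e * r12 * (1 - e)))]
    exact addLgen hg hf h12l h22l
  · rw [add_comm ((1 - e) * r22 * (1 - e)) ((1 - e) * r21 * e),
      add_comm (f ((1 - e) * r22 * (1 - e))) (f ((1 - e) * r21 * e))]
    exact addRgen hg hf h21r h22r
end

section
/- Let R be a ring with identity and a nontrivial idempotent e, and let g : R → R satisfy Assumption B. If f : R → R is a multiplicative generalized skew semi-derivation with associated map g, multiplicative skew semi-derivation d, and automorphism α, then f is additive on R. -/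
theorem stmt_19 {R : Type*} [Ring R] (e : R) (he : e * e = e) (he0 : e ≠ 0) (he1 : e ≠ 1)
    (g : R → R) (hg : AssumptionB e g) (α : R ≃+* R) (d f : R → R)
    (hd : IsMultSkewSemiDeriv d g α)
    (hf : IsMultGenSkewSemiDeriv f d g α) :
    ∀ x y : R, f (x + y) = f x + f y := by
  obtain ⟨hg0, hgA, -⟩ := hg
  obtain ⟨hf1, -, -⟩ := hf
  have hpel0 : pel e 0 = e := rfl
  have hpel1 : pel e 1 = 1 - e := rfl
  have hf0 : f 0 = 0 := by
    have h := hf1 0 0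
    simpa [hg0] using h
  -- Tool A: anything right-annihilating g(R_ii) is zero
  have toolA : ∀ (i : Fin 2) (T : R), (∀ s ∈ peirceSet e i i, T * g s = 0) → T = 0 := by
    intro i T hT
    have key : ∀ j : Fin 2, pel e j * T = 0 := by
      intro j
      have hab : pel e j * T * pel e 0 + pel e j * T * pel e 1 = pel e j * T := by
        rw [hpel0, hpel1]; noncomm_ring
      have h := hgA i j (pel e j * T * pel e 0) ⟨T, rfl⟩ (pel e j * T * pel e 1) ⟨T, rfl⟩
        (fun s hs => by rw [hab, mul_assoc, hT s hs, mul_zero])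
      rw [hab] at h
      exact h
    have h01 : pel e 0 + pel e 1 = 1 := by rw [hpel0, hpel1]; abel
    calc T = (pel e 0 + pel e 1) * T := by rw [h01, one_mul]
      _ = pel e 0 * T + pel e 1 * T := add_mul _ _ _
      _ = 0 := by rw [key 0, key 1, add_zero]
  -- key computation
  have keyc : ∀ x y s : R, (f (x + y) - f x - f y) * g s
      = f (x * s + y * s) - f (x * s) - f (y * s) := by
    intro x y s
    have h1 := hf1 (x + y) s
    have h2 := hf1 x s
    have h3 := hf1 y s
    rw [add_mul] at h1
    rw [h1, h2, h3, map_add]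
    noncomm_ring
  intro x y
  have W0 : f (x + y) - f x - f y = 0 := by
    apply toolA 0
    rintro s ⟨r, rfl⟩
    rw [keyc]
    apply toolA 1
    rintro t ⟨r', rfl⟩
    rw [keyc]
    have he2 : e * (1 - e) = 0 := by rw [mul_sub, mul_one, he, sub_self]
    have hz : ∀ z : R,
        z * (pel e 0 * r * pel e 0) * (pel e 1 * r' * pel e 1) = 0 := by
      intro z
      rw [hpel0, hpel1]
      calc z * (e * r * e) * ((1 - e) * r' * (1 - e))
          = z * (e * r) * (e * (1 - e)) * (r' * (1 - e)) := by noncomm_ring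
        _ = 0 := by rw [he2, mul_zero, zero_mul]
    rw [hz x, hz y, add_zero, hf0, sub_zero, sub_zero]
  rw [sub_sub] at W0
  exact sub_eq_zero.mp W0
end
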